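/- arXiv:1209.4670 — 3 statements merged into one kernel-verified Lean document; each statement's English description precedes it below -/
import Mathlib

section
/- Let $M$ be a compact metric space, $f\colon M\to M$ a homeomorphism, $x_0\in M$, $r>0$, $n\geq 1$, with the sets $f^j(B(x_0,r))$, $|j|\leq 2^n$, pairwise disjoint, and let $u$ be the tent-type function $u(x) = \sum_{j=-2^n+1}^{2^n-1} \chi_{f^j(B(x_0,r))}(x)\,(1-|j|/2^n)\,\frac{r - d(f^{-j}(x),x_0)}{r}$. Then the coboundary $\phi := u\circ f - u$ satisfies $\|\phi\|_{C^0} \leq 1/2^n$. -/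
/-- The `j`-th iterate of a homeomorphism, for `j : ℤ` (negative iterates are iterates of
the inverse homeomorphism). -/
def iterZ {M : Type*} [TopologicalSpace M] (f : M ≃ₜ M) (j : ℤ) : M → M :=
  fun x => if 0 ≤ j then (⇑f)^[j.toNat] x else (⇑f.symm)^[(-j).toNat] x

lemma iterZ_eq_zpow {M : Type*} [TopologicalSpace M] (f : M ≃ₜ M) (j : ℤ) :
    iterZ f j = ⇑(f.toEquiv ^ j) := by
  unfold iterZ
  ext x
  split_ifs with h
  · have : (⇑f)^[j.toNat] x = ⇑(f.toEquiv ^ j.toNat) x := rfl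
    rw [this, ← zpow_natCast, Int.toNat_of_nonneg h]
  · have : (⇑f.symm)^[(-j).toNat] x = ⇑(f.toEquiv⁻¹ ^ (-j).toNat) x := rfl
    rw [this, ← zpow_natCast, Int.toNat_of_nonneg (by omega), inv_zpow, ← zpow_neg, neg_neg]

lemma iterZ_add {M : Type*} [TopologicalSpace M] (f : M ≃ₜ M) (a b : ℤ) (x : M) :
    iterZ f a (iterZ f b x) = iterZ f (a + b) x := by
  simp only [iterZ_eq_zpow, ← Equiv.Perm.mul_apply, ← zpow_add]

lemma iterZ_one {M : Type*} [TopologicalSpace M] (f : M ≃ₜ M) (x : M) :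
    iterZ f 1 x = f x := by
  simp [iterZ_eq_zpow]

lemma mem_iterZ_image {M : Type*} [TopologicalSpace M] (f : M ≃ₜ M) (j : ℤ) (s : Set M)
    (x : M) : x ∈ iterZ f j '' s ↔ iterZ f (-j) x ∈ s := by
  rw [iterZ_eq_zpow, iterZ_eq_zpow, Set.mem_image_equiv]
  have : (f.toEquiv ^ j).symm = f.toEquiv ^ (-j) := by
    rw [zpow_neg]; rfl
  rw [this]

/-- The coboundary `φ = u ∘ f - u` of the tent-type function `u` has sup norm at most
`1 / 2ⁿ`. -/
theorem tent_coboundary_small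
    {M : Type*} [MetricSpace M] [CompactSpace M] (f : M ≃ₜ M)
    (x₀ : M) (r : ℝ) (hr : 0 < r) (n : ℕ) (hn : 1 ≤ n)
    (hdisj : ∀ i j : ℤ, |i| ≤ 2 ^ n → |j| ≤ 2 ^ n → i ≠ j →
      Disjoint (iterZ f i '' Metric.ball x₀ r) (iterZ f j '' Metric.ball x₀ r))
    (u : M → ℝ)
    (hu : u = fun x => ∑ j ∈ Finset.Icc (-(2 ^ n - 1) : ℤ) (2 ^ n - 1),
      Set.indicator (iterZ f j '' Metric.ball x₀ r)
        (fun y => (1 - (|j| : ℝ) / 2 ^ n) * ((r - dist (iterZ f (-j) y) x₀) / r)) x)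
    (φ : M → ℝ) (hφ : φ = fun x => u (f x) - u x) :
    ∀ x : M, |φ x| ≤ 1 / 2 ^ n := by
  have h2 : (0:ℝ) < 2 ^ n := by positivity
  have hpow : (0:ℤ) < 2 ^ n := by positivity
  set S : ℤ → Set M := fun j => iterZ f j '' Metric.ball x₀ r with hS
  have hnone : ∀ y : M,
      (∀ j ∈ Finset.Icc (-(2 ^ n - 1) : ℤ) (2 ^ n - 1), y ∉ S j) → u y = 0 := by
    intro y hy
    rw [hu]
    exact Finset.sum_eq_zero fun j hj => Set.indicator_of_notMem (hy j hj) _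
  have huval : ∀ (y : M) (k : ℤ), |k| ≤ 2 ^ n → y ∈ S k →
      u y = (1 - |(k : ℝ)| / 2 ^ n) * ((r - dist (iterZ f (-k) y) x₀) / r) := by
    intro y k hk hyk
    have hzero : ∀ j ∈ Finset.Icc (-(2 ^ n - 1) : ℤ) (2 ^ n - 1), j ≠ k →
        Set.indicator (S j)
          (fun z => (1 - |(j : ℝ)| / 2 ^ n) * ((r - dist (iterZ f (-j) z) x₀) / r)) y = 0 := by
      intro j hj hjk
      simp only [Finset.mem_Icc] at hj
      apply Set.indicator_of_notMem
      intro hyj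
      exact Set.disjoint_left.mp
        (hdisj j k (abs_le.mpr ⟨by omega, by omega⟩) hk hjk) hyj hyk
    rw [hu]
    by_cases hkin : k ∈ Finset.Icc (-(2 ^ n - 1) : ℤ) (2 ^ n - 1)
    · exact (Finset.sum_eq_single_of_mem k hkin hzero).trans
        (by rw [Set.indicator_of_mem hyk])
    · have hk2 : |k| = 2 ^ n := by
        rcases abs_le.mp hk with ⟨h1, h2⟩
        simp only [Finset.mem_Icc] at hkin
        rcases abs_cases k with ⟨h3, _⟩ | ⟨h3, _⟩ <;> omega
      have hcast : |(k : ℝ)| = 2 ^ n := by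
        rw [← Int.cast_abs, hk2]; push_cast; ring
      have hR : (1 - |(k : ℝ)| / 2 ^ n) * ((r - dist (iterZ f (-k) y) x₀) / r) = 0 := by
        rw [hcast, div_self h2.ne', sub_self, zero_mul]
      rw [hR]
      exact Finset.sum_eq_zero fun j hj => hzero j hj (fun h => hkin (h ▸ hj))
  have hshift : ∀ (y : M) (j : ℤ), f y ∈ S j ↔ y ∈ S (j - 1) := by
    intro y j
    have he : iterZ f (-j) (f y) = iterZ f (-(j - 1)) y := by
      rw [← iterZ_one f y, iterZ_add]
      congr 1
      ring
    simp only [hS, mem_iterZ_image, he]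
  intro x
  simp only [hφ]
  by_cases hex : ∃ k : ℤ, |k| ≤ 2 ^ n ∧ x ∈ S k
  · obtain ⟨k, hk, hxk⟩ := hex
    set t : ℝ := (r - dist (iterZ f (-k) x) x₀) / r with ht
    have hxball : iterZ f (-k) x ∈ Metric.ball x₀ r := (mem_iterZ_image f k _ x).mp hxk
    have hd : dist (iterZ f (-k) x) x₀ < r := Metric.mem_ball.mp hxball
    have ht0 : 0 ≤ t := div_nonneg (by linarith) hr.le
    have ht1 : t ≤ 1 := by
      rw [ht, div_le_one hr]
      have := dist_nonneg (x := iterZ f (-k) x) (y := x₀)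
      linarith
    have hux : u x = (1 - |(k : ℝ)| / 2 ^ n) * t := huval x k hk hxk
    by_cases hk1 : |k + 1| ≤ 2 ^ n
    · have hk11 : k + 1 - 1 = k := by ring
      have hfx : f x ∈ S (k + 1) := (hshift x (k + 1)).mpr (by rw [hk11]; exact hxk)
      have he : iterZ f (-(k + 1)) (f x) = iterZ f (-k) x := by
        rw [← iterZ_one f x, iterZ_add]
        congr 1
        ring
      have hufx : u (f x) = (1 - |(k : ℝ) + 1| / 2 ^ n) * t := by
        rw [huval (f x) (k + 1) hk1 hfx, he, ← ht]
        push_cast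
        ring
      have habs : |(|(k : ℝ)| - |(k : ℝ) + 1|)| ≤ 1 := by
        have h := abs_abs_sub_abs_le_abs_sub (k : ℝ) ((k : ℝ) + 1)
        simpa using h
      have hdiff : u (f x) - u x = ((|(k : ℝ)| - |(k : ℝ) + 1|) / 2 ^ n) * t := by
        rw [hufx, hux]; ring
      rw [hdiff, abs_mul, abs_div, abs_of_nonneg h2.le, abs_of_nonneg ht0]
      calc |(|(k : ℝ)| - |(k : ℝ) + 1|)| / 2 ^ n * t
          ≤ 1 / 2 ^ n * 1 := mul_le_mul (by gcongr) ht1 ht0 (by positivity)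
        _ = 1 / 2 ^ n := mul_one _
    · have hkval : k = 2 ^ n := by
        rcases abs_le.mp hk with ⟨h1, h2⟩
        rcases abs_cases (k + 1) with ⟨h3, _⟩ | ⟨h3, _⟩ <;> omega
      have hux0 : u x = 0 := by
        rw [hux]
        have : |(k : ℝ)| = 2 ^ n := by
          rw [hkval]; push_cast; rw [abs_of_nonneg (by positivity)]
        rw [this, div_self h2.ne', sub_self, zero_mul]
      have hufx0 : u (f x) = 0 := by
        apply hnone
        intro j hj hfxj
        simp only [Finset.mem_Icc] at hj
        have hxj : x ∈ S (j - 1) := (hshift x j).mp hfxj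
        have hj1 : |j - 1| ≤ 2 ^ n := abs_le.mpr ⟨by omega, by omega⟩
        by_cases hjk : j - 1 = k
        · omega
        · exact Set.disjoint_left.mp (hdisj (j - 1) k hj1 hk hjk) hxj hxk
      rw [hux0, hufx0]
      simpa using (by positivity : (0:ℝ) ≤ 1 / 2 ^ n)
  · push_neg at hex
    have hux0 : u x = 0 := by
      apply hnone
      intro j hj
      simp only [Finset.mem_Icc] at hj
      exact hex j (abs_le.mpr ⟨by omega, by omega⟩)
    have hufx0 : u (f x) = 0 := by
      apply hnone
      intro j hj hfxj
      simp only [Finset.mem_Icc] at hj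
      have hxj : x ∈ S (j - 1) := (hshift x j).mp hfxj
      exact hex (j - 1) (abs_le.mpr ⟨by omega, by omega⟩) hxj
    rw [hux0, hufx0]
    simpa using (by positivity : (0:ℝ) ≤ 1 / 2 ^ n)
end

section
/- Let $M$ be a compact metric space and $f\colon M\to M$ a non-periodic homeomorphism. Then for every $n\in\mathbb{N}$ there exist $u_n\in C^0(M)$ and $\phi_n = u_n\circ f - u_n$ such that $\|\phi_n\|_{C^0} \leq 2^{-n}$ while $\inf_{v\circ f = v}\|u_n - v\|_{C^0} \geq 1/2$. Consequently, the inverse of the induced operator $\bar L_f\colon C^0(M)/\ker L_f \to B(f,C^0(M))$ is unbounded. -/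
open Metric Finset

/-- If `f` is non-periodic, for each `N ≥ 1` there is a point whose first `N`
iterates all differ from it. -/
lemma exists_long_orbit {M : Type*} [MetricSpace M] (f : M ≃ₜ M)
    (hnp : ∀ q : ℕ, 1 ≤ q → (⇑f)^[q] ≠ id) (N : ℕ) :
    ∃ x : M, ∀ d : ℕ, 1 ≤ d → d ≤ N → (⇑f)^[d] x ≠ x := by
  by_contra hc
  push_neg at hc
  apply hnp (N.factorial) N.factorial_pos
  funext x
  obtain ⟨d, hd1, hdN, hfix⟩ := hc x
  obtain ⟨m, hm⟩ := Nat.dvd_factorial hd1 hdN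
  simp only [id_eq]
  rw [hm, Function.iterate_mul]
  exact Function.iterate_fixed hfix m

/-- The key construction: for each `n`, a continuous function whose coboundary is
at most `1/2^n` in sup norm but which is at distance `≥ 1/2` from all invariant
functions. -/
lemma key_construction {M : Type*} [MetricSpace M] [CompactSpace M] (f : M ≃ₜ M)
    (hnp : ∀ q : ℕ, 1 ≤ q → (⇑f)^[q] ≠ id) (n : ℕ) :
    ∃ u : C(M, ℝ),
      ‖u.comp (f : C(M, M)) - u‖ ≤ 1 / 2 ^ n ∧
      (1 / 2 : ℝ) ≤ Metric.infDist u {v : C(M, ℝ) | ∀ x : M, v (f x) = v x} := by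
  set N : ℕ := 2 ^ n with hNdef
  have hN1 : 1 ≤ N := Nat.one_le_two_pow
  have hNR : (0 : ℝ) < N := by positivity
  obtain ⟨x, hx⟩ := exists_long_orbit f hnp (2 * N)
  -- choose moduli of continuity for each iterate
  have hδd : ∀ d : ℕ, 1 ≤ d → d ≤ 2 * N → ∃ δ > 0,
      ∀ y : M, dist y x < δ → dist ((⇑f)^[d] y) ((⇑f)^[d] x) < dist ((⇑f)^[d] x) x / 2 := by
    intro d hd1 hd2
    have hr : 0 < dist ((⇑f)^[d] x) x / 2 := by
      have := hx d hd1 hd2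
      have : 0 < dist ((⇑f)^[d] x) x := dist_pos.mpr this
      linarith
    obtain ⟨δ, hδ, hδ'⟩ := Metric.continuousAt_iff.mp
      ((f.continuous.iterate d).continuousAt (x := x)) _ hr
    exact ⟨δ, hδ, fun y hy => hδ' hy⟩
  choose δd hδdpos hδdprop using hδd
  -- global δ
  have hne : (Finset.Icc 1 (2 * N)).Nonempty := ⟨1, by simp; omega⟩
  set δ : ℝ := (Finset.Icc 1 (2 * N)).inf' hne
      (fun d => if h : 1 ≤ d ∧ d ≤ 2 * N then
        min (δd d h.1 h.2) (dist ((⇑f)^[d] x) x / 2) else 1) with hδdef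
  have hδpos : 0 < δ := by
    rw [hδdef, Finset.lt_inf'_iff]
    intro d hd
    rw [Finset.mem_Icc] at hd
    rw [dif_pos hd]
    have := hx d hd.1 hd.2
    have h2 : 0 < dist ((⇑f)^[d] x) x := dist_pos.mpr this
    exact lt_min (hδdpos d hd.1 hd.2) (by linarith)
  have hδle : ∀ d (h1 : 1 ≤ d) (h2 : d ≤ 2 * N),
      δ ≤ min (δd d h1 h2) (dist ((⇑f)^[d] x) x / 2) := by
    intro d h1 h2
    have := Finset.inf'_le (b := d)
      (f := fun d => if h : 1 ≤ d ∧ d ≤ 2 * N then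
        min (δd d h.1 h.2) (dist ((⇑f)^[d] x) x / 2) else 1)
      (by rw [Finset.mem_Icc]; exact ⟨h1, h2⟩)
    rwa [dif_pos ⟨h1, h2⟩] at this
  -- the disjointness engine
  have hdisj : ∀ d : ℕ, 1 ≤ d → d ≤ 2 * N → ∀ y z : M,
      dist y x < δ → dist z x < δ → (⇑f)^[d] y ≠ z := by
    intro d h1 h2 y z hy hz hyz
    have hmin := hδle d h1 h2
    have hy' : dist ((⇑f)^[d] y) ((⇑f)^[d] x) < dist ((⇑f)^[d] x) x / 2 :=
      hδdprop d h1 h2 y (lt_of_lt_of_le hy (hmin.trans (min_le_left _ _)))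
    have htri : dist ((⇑f)^[d] x) x ≤ dist ((⇑f)^[d] x) ((⇑f)^[d] y) + dist ((⇑f)^[d] y) x :=
      dist_triangle _ _ _
    rw [dist_comm ((⇑f)^[d] x) ((⇑f)^[d] y)] at htri
    have : dist ((⇑f)^[d] x) x / 2 ≤ dist ((⇑f)^[d] y) x := by linarith
    rw [hyz] at this
    have := lt_of_lt_of_le hz (hmin.trans (min_le_right _ _))
    linarith
  -- the bump function
  set h : C(M, ℝ) := ⟨fun y => max (1 - dist y x / δ) 0,
    (continuous_const.sub ((continuous_id.dist continuous_const).div_const δ)).max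
      continuous_const⟩ with hhdef
  have h_nonneg : ∀ y, 0 ≤ h y := fun y => le_max_right _ _
  have h_le_one : ∀ y, h y ≤ 1 := by
    intro y
    apply max_le _ zero_le_one
    have : 0 ≤ dist y x / δ := div_nonneg dist_nonneg hδpos.le
    linarith
  have h_at_x : h x = 1 := by
    simp [hhdef]
  have h_supp : ∀ y, h y ≠ 0 → dist y x < δ := by
    intro y hy
    by_contra hcon
    push_neg at hcon
    apply hy
    have : 1 - dist y x / δ ≤ 0 := by
      have : 1 ≤ dist y x / δ := (one_le_div hδpos).mpr hcon
      linarith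
    simpa [hhdef] using max_eq_right this
  -- h vanishes at distinct backward iterates
  have hone : ∀ y : M, ∀ i j : ℕ, i ≤ 2 * N → j ≤ 2 * N → i ≠ j →
      h ((⇑f.symm)^[i] y) ≠ 0 → h ((⇑f.symm)^[j] y) = 0 := by
    have main : ∀ y : M, ∀ i j : ℕ, i < j → j ≤ 2 * N →
        h ((⇑f.symm)^[i] y) ≠ 0 → h ((⇑f.symm)^[j] y) ≠ 0 → False := by
      intro y i j hij hj hi0 hj0
      have hdi := h_supp _ hi0
      have hdj := h_supp _ hj0
      have hfd : ((⇑f)^[j - i]) ((⇑f.symm)^[j] y) = (⇑f.symm)^[i] y := by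
        have : (⇑f.symm)^[j] y = (⇑f.symm)^[j - i] ((⇑f.symm)^[i] y) := by
          rw [← Function.iterate_add_apply]
          congr 1
          omega
        rw [this]
        exact (Function.LeftInverse.iterate f.apply_symm_apply (j - i)) _
      exact hdisj (j - i) (by omega) (by omega) _ _ hdj hdi hfd
    intro y i j hi hj hij hi0
    by_contra hj0
    rcases lt_or_gt_of_ne hij with hlt | hgt
    · exact main y i j hlt hj hi0 hj0
    · exact main y j i hgt hi hj0 hi0
  -- coefficients
  set c : ℕ → ℝ := fun k => ((N : ℝ) - |(N : ℝ) - (k : ℝ)|) / N with hcdef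
  have hc0 : c 0 = 0 := by simp [hcdef, abs_of_nonneg hNR.le]
  have hcN : c N = 1 := by
    simp [hcdef]
  have hc2N : c (2 * N) = 0 := by
    have h1 : |(N : ℝ) - ((2 * N : ℕ) : ℝ)| = N := by
      push_cast
      rw [show (N : ℝ) - 2 * N = -(N : ℝ) by ring, abs_neg, abs_of_nonneg hNR.le]
    rw [hcdef]
    simp only
    rw [h1]
    simp
  have hcstep : ∀ k : ℕ, |c (k + 1) - c k| ≤ 1 / N := by
    intro k
    have heq : c (k + 1) - c k = (|(N : ℝ) - k| - |(N : ℝ) - ((k : ℝ) + 1)|) / N := by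
      rw [hcdef]
      push_cast
      ring
    rw [heq, abs_div, abs_of_pos hNR]
    gcongr
    calc |(|(N : ℝ) - k| - |(N : ℝ) - ((k : ℝ) + 1)|)|
        ≤ |((N : ℝ) - k) - ((N : ℝ) - ((k : ℝ) + 1))| := abs_abs_sub_abs_le_abs_sub _ _
      _ = 1 := by norm_num
  have hcnonneg : ∀ k : ℕ, k ≤ 2 * N → 0 ≤ c k := by
    intro k hk
    rw [hcdef]
    apply div_nonneg _ hNR.le
    have : |(N : ℝ) - k| ≤ N := by
      rw [abs_le]
      constructor
      · have : (k : ℝ) ≤ 2 * N := by exact_mod_cast hk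
        linarith
      · have : (0 : ℝ) ≤ k := Nat.cast_nonneg k
        linarith
    linarith
  -- the function u
  set u : C(M, ℝ) := ⟨fun y => ∑ k ∈ Finset.range (2 * N + 1), c k * h ((⇑f.symm)^[k] y),
    continuous_finset_sum _ fun k _ => continuous_const.mul
      (h.continuous.comp (f.symm.continuous.iterate k))⟩ with hudef
  have hu_apply : ∀ y : M, u y = ∑ k ∈ Finset.range (2 * N + 1), c k * h ((⇑f.symm)^[k] y) :=
    fun y => rfl
  refine ⟨u, ?_, ?_⟩
  · -- the coboundary is small
    rw [ContinuousMap.norm_le _ (by positivity)]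
    intro y
    have hshift : ∀ j : ℕ, (⇑f.symm)^[j + 1] (f y) = (⇑f.symm)^[j] y := by
      intro j
      rw [Function.iterate_succ_apply]
      congr 1
      exact f.symm_apply_apply y
    have huf : u (f y) = ∑ j ∈ Finset.range (2 * N), c (j + 1) * h ((⇑f.symm)^[j] y) := by
      rw [hu_apply, Finset.sum_range_succ' (fun k => c k * h ((⇑f.symm)^[k] (f y))) (2 * N)]
      rw [hc0]
      simp only [zero_mul, add_zero]
      apply Finset.sum_congr rfl
      intro j _
      rw [hshift j]
    have huy : u y = ∑ j ∈ Finset.range (2 * N), c j * h ((⇑f.symm)^[j] y) := by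
      rw [hu_apply, Finset.sum_range_succ, hc2N]
      simp
    have hval : (u.comp (f : C(M, M)) - u) y
        = ∑ j ∈ Finset.range (2 * N), (c (j + 1) - c j) * h ((⇑f.symm)^[j] y) := by
      simp only [ContinuousMap.sub_apply, ContinuousMap.comp_apply, ContinuousMap.coe_coe]
      rw [huf, huy, ← Finset.sum_sub_distrib]
      apply Finset.sum_congr rfl
      intro j _
      ring
    rw [hval]
    have hsum1 : ∑ j ∈ Finset.range (2 * N), h ((⇑f.symm)^[j] y) ≤ 1 := by
      by_cases hex : ∃ j ∈ Finset.range (2 * N), h ((⇑f.symm)^[j] y) ≠ 0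
      · obtain ⟨j₀, hj₀mem, hj₀⟩ := hex
        rw [Finset.sum_eq_single_of_mem j₀ hj₀mem]
        · exact h_le_one _
        · intro b hb hbne
          rw [Finset.mem_range] at hb hj₀mem
          exact hone y j₀ b (by omega) (by omega) (Ne.symm hbne) hj₀
      · push_neg at hex
        rw [Finset.sum_eq_zero (fun j hj => hex j hj)]
        exact zero_le_one
    calc ‖∑ j ∈ Finset.range (2 * N), (c (j + 1) - c j) * h ((⇑f.symm)^[j] y)‖
        ≤ ∑ j ∈ Finset.range (2 * N), ‖(c (j + 1) - c j) * h ((⇑f.symm)^[j] y)‖ :=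
          norm_sum_le _ _
      _ ≤ ∑ j ∈ Finset.range (2 * N), (1 / N) * h ((⇑f.symm)^[j] y) := by
          apply Finset.sum_le_sum
          intro j _
          rw [norm_mul, Real.norm_eq_abs, Real.norm_eq_abs, abs_of_nonneg (h_nonneg _)]
          exact mul_le_mul_of_nonneg_right (hcstep j) (h_nonneg _)
      _ = (1 / N) * ∑ j ∈ Finset.range (2 * N), h ((⇑f.symm)^[j] y) := by
          rw [Finset.mul_sum]
      _ ≤ (1 / N) * 1 := by
          apply mul_le_mul_of_nonneg_left hsum1 (by positivity)
      _ = 1 / 2 ^ n := by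
          rw [mul_one, hNdef]
          push_cast
          norm_num
  · -- distance to the invariant functions
    set S : Set C(M, ℝ) := {v : C(M, ℝ) | ∀ x : M, v (f x) = v x} with hSdef
    have hSne : S.Nonempty := ⟨0, fun _ => rfl⟩
    have hux : u x = 0 := by
      rw [hu_apply]
      apply Finset.sum_eq_zero
      intro k hk
      rcases Nat.eq_zero_or_pos k with hk0 | hkpos
      · rw [hk0, hc0, zero_mul]
      · rw [Finset.mem_range] at hk
        have h0 : h ((⇑f.symm)^[0] x) ≠ 0 := by
          simp only [Function.iterate_zero, id_eq]
          rw [h_at_x]; norm_num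
        rw [hone x 0 k (by omega) (by omega) (by omega) h0, mul_zero]
    have hsymmN : (⇑f.symm)^[N] ((⇑f)^[N] x) = x :=
      (Function.LeftInverse.iterate f.symm_apply_apply N) x
    have hup : u ((⇑f)^[N] x) = 1 := by
      rw [hu_apply]
      rw [Finset.sum_eq_single_of_mem N (by rw [Finset.mem_range]; omega)]
      · rw [hsymmN, h_at_x, hcN, mul_one]
      · intro b hb hbne
        rw [Finset.mem_range] at hb
        have h0 : h ((⇑f.symm)^[N] ((⇑f)^[N] x)) ≠ 0 := by
          rw [hsymmN, h_at_x]; norm_num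
        rw [hone ((⇑f)^[N] x) N b (by omega) (by omega) (Ne.symm hbne) h0, mul_zero]
    by_contra hcon
    push_neg at hcon
    obtain ⟨v, hvS, hvd⟩ := (Metric.infDist_lt_iff hSne).mp hcon
    have hvinv : v ((⇑f)^[N] x) = v x := by
      clear hup hsymmN
      induction N with
      | zero => rfl
      | succ m ih =>
        rw [Function.iterate_succ_apply', hvS, ih]
    have h1 : dist (u ((⇑f)^[N] x)) (v ((⇑f)^[N] x)) ≤ dist u v :=
      ContinuousMap.dist_apply_le_dist _
    have h2 : dist (v x) (u x) ≤ dist u v := by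
      rw [dist_comm]
      exact ContinuousMap.dist_apply_le_dist _
    rw [hup, hvinv] at h1
    rw [hux] at h2
    have h5 : (1 : ℝ) ≤ dist (1 : ℝ) (v x) + dist (v x) (0 : ℝ) := by
      have := dist_triangle (1 : ℝ) (v x) 0
      simpa using this
    linarith

/-- For a non-periodic homeomorphism `f`, there are functions `uₙ ∈ C⁰(M)` whose
coboundaries `φₙ = uₙ ∘ f - uₙ` are arbitrarily small in sup norm while `uₙ` stays at
distance at least `1/2` from the invariant functions; consequently, the inverse of the
induced operator `L̄_f` is unbounded. -/
theorem inverse_of_induced_operator_unbounded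
    {M : Type*} [MetricSpace M] [CompactSpace M] (f : M ≃ₜ M)
    (hnp : ∀ q : ℕ, 1 ≤ q → (⇑f)^[q] ≠ id) :
    (∀ n : ℕ, ∃ u : C(M, ℝ),
      ‖u.comp (f : C(M, M)) - u‖ ≤ 1 / 2 ^ n ∧
      (1 / 2 : ℝ) ≤ Metric.infDist u {v : C(M, ℝ) | ∀ x : M, v (f x) = v x}) ∧
    ¬ ∃ C : ℝ, ∀ u : C(M, ℝ),
      Metric.infDist u {v : C(M, ℝ) | ∀ x : M, v (f x) = v x} ≤
        C * ‖u.comp (f : C(M, M)) - u‖ := by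
  refine ⟨key_construction f hnp, ?_⟩
  rintro ⟨C, hC⟩
  rcases le_or_gt C 0 with hC0 | hC0
  · obtain ⟨u, hu1, hu2⟩ := key_construction f hnp 0
    have := hC u
    have hnn : (0 : ℝ) ≤ ‖u.comp (f : C(M, M)) - u‖ := norm_nonneg _
    nlinarith
  · obtain ⟨n, hn⟩ := pow_unbounded_of_one_lt (2 * C) (by norm_num : (1 : ℝ) < 2)
    obtain ⟨u, hu1, hu2⟩ := key_construction f hnp n
    have h1 := hC u
    have h2 : C * ‖u.comp (f : C(M, M)) - u‖ ≤ C * (1 / 2 ^ n) :=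
      mul_le_mul_of_nonneg_left hu1 hC0.le
    have h3 : C * (1 / 2 ^ n) < 1 / 2 := by
      have hp : (0 : ℝ) < 2 ^ n := by positivity
      rw [mul_one_div, div_lt_div_iff₀ hp (by norm_num : (0 : ℝ) < 2)]
      nlinarith
    linarith
end

section
/- Let $M$ be a compact metric space and $f\colon M\to M$ a homeomorphism that is not periodic. Then $B(f,C^0(M)) = \{u\circ f - u : u\in C^0(M)\}$ is not closed in $C^0(M)$ (with the uniform norm). -/
/-!
If the coboundaries `u ∘ f - u` formed a closed subspace of `C(M, ℝ)`, the open mapping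
theorem would give a constant `C` such that every coboundary `φ` has a primitive `u` with
`‖u‖ ≤ C * ‖φ‖`. Since the Birkhoff sums of `φ` are the increments of any of its primitives
along orbits, every increment `u (f^[N] x) - u x` would then be at most `2 * C * ‖φ‖`.
Non-periodicity gives, for each `N`, an orbit segment `x, f x, …, f^[2N-1] x` of distinct
points; an Urysohn function `h` that is `0` on its first half and `1` on its second half has
the Birkhoff sum `v = ∑_{k < N} h ∘ f^[k]` as a primitive of `h ∘ f^[N] - h`, a coboundary
of norm at most `1`, while `v (f^[N] x) - v x = N`. Taking `N > 2 * C` gives a contradiction.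
-/

open Function Set

theorem Function.Injective.exists_injOn_iterate {α : Type*} {f : α → α} (hf : Injective f)
    (hnp : ∀ q : ℕ, 1 ≤ q → f^[q] ≠ id) (n : ℕ) : ∃ x, InjOn (f^[·] x) (Iio n) := by
  obtain ⟨x, hx⟩ := Function.ne_iff.mp (hnp n.factorial n.factorial_pos)
  refine ⟨x, fun i hi j hj hij => ?_⟩
  by_contra hne
  wlog hlt : j < i generalizing i j
  · exact this j hj i hi hij.symm (Ne.symm hne) (by omega)
  have hper : IsPeriodicPt f (i - j) x := iterate_cancel hf hij
  exact hx (hper.trans_dvd (Nat.dvd_factorial (by omega) (by simp only [mem_Iio] at hi; omega)))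

theorem birkhoffSum_sub_comp_self {α G : Type*} [AddCommGroup G] (f : α → α) (u : α → G)
    (n : ℕ) (x : α) : birkhoffSum f (fun y => u (f y) - u y) n x = u (f^[n] x) - u x := by
  simp only [birkhoffSum, ← iterate_succ_apply' f]
  exact Finset.sum_range_sub (fun k => u (f^[k] x)) n

theorem ContinuousLinearMap.exists_preimage_norm_le_of_isClosed_range {𝕜 E F : Type*}
    [NontriviallyNormedField 𝕜] [NormedAddCommGroup E] [NormedSpace 𝕜 E] [CompleteSpace E]
    [NormedAddCommGroup F] [NormedSpace 𝕜 F] [CompleteSpace F] (T : E →L[𝕜] F)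
    (hT : IsClosed (range T)) : ∃ C > 0, ∀ y ∈ range T, ∃ x, T x = y ∧ ‖x‖ ≤ C * ‖y‖ := by
  have : CompleteSpace (LinearMap.range (T : E →ₗ[𝕜] F)) := hT.isComplete.completeSpace_coe
  obtain ⟨C, hC, hpre⟩ :=
    T.rangeRestrict.exists_preimage_norm_le rangeFactorization_surjective
  refine ⟨C, hC, ?_⟩
  rintro _ ⟨x₀, rfl⟩
  obtain ⟨x, hx, hnorm⟩ := hpre ⟨T x₀, x₀, rfl⟩
  exact ⟨x, congrArg Subtype.val hx, hnorm⟩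

namespace ContinuousMap

variable {X : Type*} [TopologicalSpace X]

def coboundary (g : C(X, X)) : C(X, ℝ) →L[ℝ] C(X, ℝ) where
  toFun u := u.comp g - u
  map_add' u v := by ext; simp only [add_comp, coe_add, coe_sub, Pi.add_apply, Pi.sub_apply]; ring
  map_smul' c u := by ext; simp only [smul_comp, coe_smul, coe_sub, Pi.smul_apply, Pi.sub_apply,
    smul_eq_mul, RingHom.id_apply]; ring
  cont := (continuous_precomp g).sub continuous_id

theorem coe_coboundary (g : C(X, X)) (u : C(X, ℝ)) :
    ⇑(coboundary g u) = fun y => u (g y) - u y :=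
  rfl

theorem range_coboundary (g : C(X, X)) :
    range (coboundary g) = {φ : C(X, ℝ) | ∃ u : C(X, ℝ), ∀ x, φ x = u (g x) - u x} := by
  ext φ
  simp only [mem_range, mem_ofPred_eq, ContinuousMap.ext_iff, coe_coboundary, eq_comm (b := φ _)]

theorem sub_eq_birkhoffSum_coboundary (g : C(X, X)) (u : C(X, ℝ)) (n : ℕ) (x : X) :
    u (g^[n] x) - u x = birkhoffSum g (coboundary g u) n x := by
  rw [coe_coboundary, birkhoffSum_sub_comp_self]

theorem exists_norm_coboundary_le_one_of_injOn [NormalSpace X] [T1Space X] [CompactSpace X]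
    (g : C(X, X)) {x : X} {N : ℕ} (hx : InjOn (g^[·] x) (Iio (2 * N))) :
    ∃ v : C(X, ℝ), ‖coboundary g v‖ ≤ 1 ∧ v (g^[N] x) - v x = N := by
  have hdisj : Disjoint ((g^[·] x) '' Iio N) ((g^[·] x) '' Ico N (2 * N)) :=
    ((Iio_disjoint_Ici le_rfl).mono_right Ico_subset_Ici_self).image hx
      (Iio_subset_Iio (by omega)) Ico_subset_Iio_self
  obtain ⟨h, h0, h1, h01⟩ := exists_continuous_zero_one_of_isClosed
    ((finite_Iio N).image _).isClosed ((finite_Ico N (2 * N)).image _).isClosed hdisj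
  let v : C(X, ℝ) := ⟨birkhoffSum g h N,
    continuous_finsetSum _ fun k _ => h.continuous.comp (g.continuous.iterate k)⟩
  refine ⟨v, (norm_le _ zero_le_one).mpr fun y => ?_, ?_⟩
  · have hv : coboundary g v y = h (g^[N] y) - h y := birkhoffSum_apply_sub_birkhoffSum g h N y
    rw [hv, Real.norm_eq_abs, abs_sub_le_iff]
    constructor <;> linarith [(h01 (g^[N] y)).1, (h01 (g^[N] y)).2, (h01 y).1, (h01 y).2]
  · have hv0 : v x = 0 := Finset.sum_eq_zero fun k hk =>
      h0 (mem_image_of_mem _ (Finset.mem_range.mp hk))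
    have hvN : v (g^[N] x) = N := by
      change ∑ k ∈ Finset.range N, h (g^[k] (g^[N] x)) = N
      rw [Finset.sum_congr rfl fun k hk => h1 ⟨k + N, ?_, iterate_add_apply g k N x⟩]
      · simp
      · simp only [Finset.mem_range] at hk; constructor <;> omega
    rw [hvN, hv0, sub_zero]

end ContinuousMap

/-- If a homeomorphism `f` of a compact metric space is not periodic, then its space of
continuous coboundaries is not closed in `C(M, ℝ)` with the uniform norm. -/
theorem coboundaries_not_closed_of_not_periodic
    {M : Type*} [MetricSpace M] [CompactSpace M] (f : M ≃ₜ M)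
    (hnp : ∀ q : ℕ, 1 ≤ q → (⇑f)^[q] ≠ id) :
    ¬ IsClosed {φ : C(M, ℝ) | ∃ u : C(M, ℝ), ∀ x, φ x = u (f x) - u x} := by
  intro hclosed
  obtain ⟨C, hC, hpre⟩ :=
    (ContinuousMap.coboundary (f : C(M, M))).exists_preimage_norm_le_of_isClosed_range
      (by rw [ContinuousMap.range_coboundary]; exact hclosed)
  obtain ⟨N, hN⟩ := exists_nat_gt (2 * C)
  obtain ⟨x, hx⟩ := f.injective.exists_injOn_iterate hnp (2 * N)
  obtain ⟨v, hv, hvN⟩ := ContinuousMap.exists_norm_coboundary_le_one_of_injOn (f : C(M, M)) hx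
  obtain ⟨u, hu, hu_le⟩ := hpre _ ⟨v, rfl⟩
  have : (N : ℝ) ≤ 2 * C := calc
    (N : ℝ) = u (f^[N] x) - u x := by
        rw [← hvN, ContinuousMap.sub_eq_birkhoffSum_coboundary, ← hu,
          ← ContinuousMap.sub_eq_birkhoffSum_coboundary]
        rfl
    _ ≤ dist (u (f^[N] x)) (u x) := le_abs_self _
    _ ≤ 2 * ‖u‖ := ContinuousMap.dist_le_two_norm u _ _
    _ ≤ 2 * C := by nlinarith
  linarith
end
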